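/- arXiv:1003.0318 — 2 statements merged into one kernel-verified Lean document; each statement's English description precedes it below -/
import Mathlib

section
/- Let k be a field and f, g : C → D two morphisms of k-coalgebras. Define E = { c ∈ C | c₍₁₎ ⊗ f(c₍₂₎) ⊗ c₍₃₎ = c₍₁₎ ⊗ g(c₍₂₎) ⊗ c₍₃₎ }, i.e., the set of c ∈ C with (id_C ⊗ f ⊗ id_C)((Δ ⊗ id)Δ(c)) = (id_C ⊗ g ⊗ id_C)((Δ ⊗ id)Δ(c)) in C ⊗ D ⊗ C. Then E is a subcoalgebra of C and the pair (E, i), with i : E → C the canonical inclusion, is an equalizer of f and g in the category of k-coalgebras. -/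
universe u v w

/-- `V` is a subcoalgebra of the coalgebra `C`: the comultiplication maps `V` into
the image of `V ⊗ V` in `C ⊗ C`. -/
def IsSubcoalgebra {k : Type u} [CommRing k] {C : Type v} [AddCommGroup C] [Module k C]
    [Coalgebra k C] (V : Submodule k C) : Prop :=
  ∀ v ∈ V, Coalgebra.comul (R := k) v ∈
    LinearMap.range (TensorProduct.map V.subtype V.subtype)

/-!
Write `ψ_φ c = c₍₁₎ ⊗ φ(c₍₂₎) ⊗ c₍₃₎`, so that `E = ker ψ_φ` for `φ = f - g`. By coassociativity,
`(ψ_φ ⊗ id) ∘ Δ` and `(id ⊗ ψ_φ) ∘ Δ` are obtained from `ψ_φ` by applying `Δ` to an outer tensor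
factor, so `Δ E ⊆ (E ⊗ C) ∩ (C ⊗ E)`, which over a field is `E ⊗ E`. Applying `ε` to both outer
factors of `ψ_φ` recovers `φ`, so `f = g` on `E`. Conversely, if `h` is a coalgebra map with
`f ∘ h = g ∘ h`, naturality gives `ψ_φ ∘ h = (h ⊗ id ⊗ h) ∘ ψ_{φ ∘ h} = 0`, so `h` factors
through `E`, uniquely since `E → C` is injective.
-/

open TensorProduct LinearMap Coalgebra

theorem ker_rTensor_inf_ker_lTensor_le {k M N P Q : Type*} [Field k]
    [AddCommGroup M] [AddCommGroup N] [AddCommGroup P] [AddCommGroup Q]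
    [Module k M] [Module k N] [Module k P] [Module k Q] (φ : M →ₗ[k] P) (ψ : N →ₗ[k] Q) :
    ker (φ.rTensor N) ⊓ ker (ψ.lTensor M) ≤ range (map (ker φ).subtype (ker ψ).subtype) := by
  rintro x ⟨hxφ, hxψ⟩
  obtain ⟨y, rfl⟩ : x ∈ range ((ker φ).subtype.rTensor N) := by
    rwa [← exact_iff.mp (Module.Flat.rTensor_exact N (exact_subtype_ker_map φ))]
  have hy : ψ.lTensor (ker φ) y = 0 := by
    apply Module.Flat.rTensor_preserves_injective_linearMap (M := Q) _ (ker φ).injective_subtype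
    rwa [map_zero, ← comp_apply, rTensor_comp_lTensor, ← lTensor_comp_rTensor, comp_apply]
  obtain ⟨z, rfl⟩ : y ∈ range ((ker ψ).subtype.lTensor (ker φ)) := by
    rwa [← exact_iff.mp (Module.Flat.lTensor_exact _ (exact_subtype_ker_map ψ))]
  exact ⟨z, by rw [← rTensor_comp_lTensor, comp_apply]⟩

section Sweedler

variable {R : Type*} [CommSemiring R] {C D : Type*} [AddCommMonoid C] [Module R C]
  [Coalgebra R C] [AddCommMonoid D] [Module R D]

/-- `ψ_φ : c ↦ c₍₁₎ ⊗ φ(c₍₂₎) ⊗ c₍₃₎`. -/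
noncomputable def sweedlerMap (φ : C →ₗ[R] D) : C →ₗ[R] (C ⊗[R] D) ⊗[R] C :=
  (φ.lTensor C).rTensor C ∘ₗ comul.rTensor C ∘ₗ comul

theorem sweedlerMap_zero : sweedlerMap (0 : C →ₗ[R] D) = 0 := by
  simp [sweedlerMap]

theorem rTensor_sweedlerMap_comp_comul (φ : C →ₗ[R] D) :
    (sweedlerMap φ).rTensor C ∘ₗ comul =
      (TensorProduct.assoc R _ _ _).symm.toLinearMap ∘ₗ comul.lTensor _ ∘ₗ sweedlerMap φ := by
  simp only [sweedlerMap, coassoc_simps]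

theorem lTensor_sweedlerMap_comp_comul (φ : C →ₗ[R] D) :
    (sweedlerMap φ).lTensor C ∘ₗ comul =
      (TensorProduct.assoc R C (C ⊗[R] D) C).toLinearMap ∘ₗ
        ((TensorProduct.assoc R C C D).toLinearMap ∘ₗ comul.rTensor D).rTensor C ∘ₗ
          sweedlerMap φ := by
  simp only [sweedlerMap, coassoc_simps]

theorem sweedlerMap_comp_coalgHom {E : Type*} [AddCommMonoid E] [Module R E] [Coalgebra R E]
    (φ : C →ₗ[R] D) (h : E →ₗc[R] C) :
    sweedlerMap φ ∘ₗ h.toLinearMap =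
      map (map h.toLinearMap id) h.toLinearMap ∘ₗ sweedlerMap (φ ∘ₗ h.toLinearMap) := by
  simp only [sweedlerMap, ← h.map_comp_comul, coassoc_simps]

theorem coalgHom_apply_mem_ker_sweedlerMap {E : Type*} [AddCommMonoid E] [Module R E]
    [Coalgebra R E] {φ : C →ₗ[R] D} (h : E →ₗc[R] C) (hφ : φ ∘ₗ h.toLinearMap = 0) (x : E) :
    h x ∈ ker (sweedlerMap φ) := by
  rw [mem_ker]
  exact congr($(sweedlerMap_comp_coalgHom φ h) x).trans
    (by rw [hφ, sweedlerMap_zero, comp_zero, LinearMap.zero_apply])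

theorem ker_sweedlerMap_le (φ : C →ₗ[R] D) : ker (sweedlerMap φ) ≤ ker φ := by
  have hφ : (TensorProduct.lid R D).toLinearMap ∘ₗ counit.rTensor D ∘ₗ
      (TensorProduct.rid R (C ⊗[R] D)).toLinearMap ∘ₗ counit.lTensor (C ⊗[R] D) ∘ₗ
        sweedlerMap φ = φ := by
    simp only [sweedlerMap, coassoc_simps, CoassocSimps.map_counit_comp_comul_right]
    rw [← rTensor_def, rTensor_counit_comp_comul]
    ext; simp
  intro c hc
  rw [mem_ker, ← hφ]
  simp [mem_ker.mp hc]

end Sweedler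

theorem sweedlerMap_sub {R : Type*} [CommRing R] {C D : Type*} [AddCommGroup C] [Module R C]
    [Coalgebra R C] [AddCommGroup D] [Module R D] (φ ψ : C →ₗ[R] D) :
    sweedlerMap (φ - ψ) = sweedlerMap φ - sweedlerMap ψ := by
  rw [sweedlerMap, sweedlerMap, sweedlerMap, lTensor_sub, rTensor_sub, sub_comp]

theorem isSubcoalgebra_ker_sweedlerMap {k : Type*} [Field k] {C D : Type*} [AddCommGroup C]
    [Module k C] [Coalgebra k C] [AddCommGroup D] [Module k D] (φ : C →ₗ[k] D) :
    IsSubcoalgebra (ker (sweedlerMap φ)) := by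
  intro c hc
  rw [mem_ker] at hc
  apply ker_rTensor_inf_ker_lTensor_le
  constructor
  · simpa [hc] using congr($(rTensor_sweedlerMap_comp_comul φ) c)
  · simpa [hc] using congr($(lTensor_sweedlerMap_comp_comul φ) c)

namespace IsSubcoalgebra

variable {k : Type*} [Field k] {C : Type*} [AddCommGroup C] [Module k C] [Coalgebra k C]
  {V : Submodule k C} (hV : IsSubcoalgebra V)

noncomputable def comul : V →ₗ[k] V ⊗[k] V :=
  (Coalgebra.comul ∘ₗ V.subtype).codRestrictOfInjective (map V.subtype V.subtype)
    (map_injective_of_flat_flat _ _ V.injective_subtype V.injective_subtype) fun v => hV v v.2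

theorem map_subtype_comp_comul :
    map V.subtype V.subtype ∘ₗ hV.comul = Coalgebra.comul ∘ₗ V.subtype :=
  codRestrictOfInjective_comp _ _ _ _

theorem map_map_subtype_comp_rTensor_comul :
    map (map V.subtype V.subtype) V.subtype ∘ₗ hV.comul.rTensor V =
      Coalgebra.comul.rTensor C ∘ₗ map V.subtype V.subtype := by
  rw [map_comp_rTensor, hV.map_subtype_comp_comul, rTensor_comp_map]

theorem map_map_subtype_comp_lTensor_comul :
    map V.subtype (map V.subtype V.subtype) ∘ₗ hV.comul.lTensor V =
      Coalgebra.comul.lTensor C ∘ₗ map V.subtype V.subtype := by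
  rw [map_comp_lTensor, hV.map_subtype_comp_comul, lTensor_comp_map]

/-- Each axiom is checked after composing with a tensor power of the inclusion `V → C`, which is
injective over a field and turns it into the corresponding axiom of `C`. -/
noncomputable abbrev coalgebra : Coalgebra k V where
  comul := hV.comul
  counit := counit ∘ₗ V.subtype
  coassoc := by
    rw [← cancel_left (map_injective_of_flat_flat _ _ V.injective_subtype
      (map_injective_of_flat_flat _ _ V.injective_subtype V.injective_subtype))]
    calc map V.subtype (map V.subtype V.subtype) ∘ₗ (TensorProduct.assoc k V V V).toLinearMap ∘ₗ
          hV.comul.rTensor V ∘ₗ hV.comul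
        = (TensorProduct.assoc k C C C).toLinearMap ∘ₗ Coalgebra.comul.rTensor C ∘ₗ
            map V.subtype V.subtype ∘ₗ hV.comul := by
          rw [← comp_assoc, map_map_comp_assoc_eq, comp_assoc, ← comp_assoc _ (rTensor _ _),
            map_map_subtype_comp_rTensor_comul, comp_assoc]
      _ = ((TensorProduct.assoc k C C C).toLinearMap ∘ₗ Coalgebra.comul.rTensor C ∘ₗ
            Coalgebra.comul) ∘ₗ V.subtype := by rw [hV.map_subtype_comp_comul]; rfl
      _ = Coalgebra.comul.lTensor C ∘ₗ map V.subtype V.subtype ∘ₗ hV.comul := by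
          rw [coassoc, hV.map_subtype_comp_comul]; rfl
      _ = map V.subtype (map V.subtype V.subtype) ∘ₗ hV.comul.lTensor V ∘ₗ hV.comul := by
          rw [← comp_assoc, ← map_map_subtype_comp_lTensor_comul, comp_assoc]
  rTensor_counit_comp_comul := by
    rw [← cancel_left (Module.Flat.lTensor_preserves_injective_linearMap (M := k) _
      V.injective_subtype)]
    calc V.subtype.lTensor k ∘ₗ (counit ∘ₗ V.subtype).rTensor V ∘ₗ hV.comul
        = (counit.rTensor C ∘ₗ Coalgebra.comul) ∘ₗ V.subtype := by
          rw [← comp_assoc, lTensor_comp_rTensor, ← rTensor_comp_map, comp_assoc,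
            hV.map_subtype_comp_comul]; rfl
      _ = V.subtype.lTensor k ∘ₗ TensorProduct.mk k k V 1 := by
          rw [rTensor_counit_comp_comul]; rfl
  lTensor_counit_comp_comul := by
    rw [← cancel_left (Module.Flat.rTensor_preserves_injective_linearMap (M := k) _
      V.injective_subtype)]
    calc V.subtype.rTensor k ∘ₗ (counit ∘ₗ V.subtype).lTensor V ∘ₗ hV.comul
        = (counit.lTensor C ∘ₗ Coalgebra.comul) ∘ₗ V.subtype := by
          rw [← comp_assoc, rTensor_comp_lTensor, ← lTensor_comp_map, comp_assoc,
            hV.map_subtype_comp_comul]; rfl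
      _ = V.subtype.rTensor k ∘ₗ (TensorProduct.mk k V k).flip 1 := by
          rw [lTensor_counit_comp_comul]; rfl

noncomputable def subtypeCoalgHom : letI := hV.coalgebra; V →ₗc[k] C :=
  letI := hV.coalgebra
  { V.subtype with
    counit_comp := rfl
    map_comp_comul := hV.map_subtype_comp_comul }

variable {E : Type*} [AddCommGroup E] [Module k E] [Coalgebra k E]

noncomputable def codRestrict (h : E →ₗc[k] C) (hh : ∀ x, h x ∈ V) :
    letI := hV.coalgebra; E →ₗc[k] V :=
  letI := hV.coalgebra
  { h.toLinearMap.codRestrict V hh with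
    counit_comp := h.counit_comp
    map_comp_comul := by
      rw [← cancel_left (map_injective_of_flat_flat _ _ V.injective_subtype V.injective_subtype)]
      change map V.subtype V.subtype ∘ₗ map (h.toLinearMap.codRestrict V hh)
          (h.toLinearMap.codRestrict V hh) ∘ₗ Coalgebra.comul =
        (map V.subtype V.subtype ∘ₗ hV.comul) ∘ₗ h.toLinearMap.codRestrict V hh
      rw [← comp_assoc, ← map_comp, subtype_comp_codRestrict, h.map_comp_comul,
        hV.map_subtype_comp_comul, comp_assoc, subtype_comp_codRestrict] }

theorem subtypeCoalgHom_comp_codRestrict (h : E →ₗc[k] C) (hh : ∀ x, h x ∈ V) :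
    letI := hV.coalgebra; hV.subtypeCoalgHom.comp (hV.codRestrict h hh) = h :=
  rfl

end IsSubcoalgebra

/-- Let `f, g : C → D` be coalgebra maps and let
`E = {c ∈ C | c₍₁₎ ⊗ f(c₍₂₎) ⊗ c₍₃₎ = c₍₁₎ ⊗ g(c₍₂₎) ⊗ c₍₃₎}`, i.e. the kernel of
`(id ⊗ f ⊗ id) ∘ (Δ ⊗ id) ∘ Δ - (id ⊗ g ⊗ id) ∘ (Δ ⊗ id) ∘ Δ : C → (C ⊗ D) ⊗ C`.
Then `E` is a subcoalgebra of `C` and `(E, i)`, with `i` the canonical inclusion,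
is an equalizer of `f` and `g` in the category of `k`-coalgebras. -/
theorem sweedler_equalizer_isSubcoalgebra_and_equalizer {k : Type u} [Field k] {C D : Type v}
    [AddCommGroup C] [Module k C] [Coalgebra k C]
    [AddCommGroup D] [Module k D] [Coalgebra k D]
    (f g : C →ₗc[k] D) (E : Submodule k C)
    (hE : E = LinearMap.ker
      ((TensorProduct.map (TensorProduct.map (LinearMap.id : C →ₗ[k] C) f.toLinearMap)
          (LinearMap.id : C →ₗ[k] C) -
        TensorProduct.map (TensorProduct.map (LinearMap.id : C →ₗ[k] C) g.toLinearMap)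
          (LinearMap.id : C →ₗ[k] C)) ∘ₗ
        LinearMap.rTensor C (Coalgebra.comul (R := k) (A := C)) ∘ₗ
        Coalgebra.comul (R := k) (A := C))) :
    IsSubcoalgebra E ∧
    ∃ _inst : Coalgebra k ↥E, ∃ i : ↥E →ₗc[k] C,
      i.toLinearMap = E.subtype ∧
      f.comp i = g.comp i ∧
      ∀ (E' : Type w) [AddCommGroup E'] [Module k E'] [Coalgebra k E'] (h : E' →ₗc[k] C),
        f.comp h = g.comp h → ∃! h' : E' →ₗc[k] ↥E, i.comp h' = h := by
  obtain rfl : E = ker (sweedlerMap (f.toLinearMap - g.toLinearMap)) := by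
    rw [hE, sweedlerMap_sub, sub_comp]; rfl
  have hV := isSubcoalgebra_ker_sweedlerMap (f.toLinearMap - g.toLinearMap)
  let := hV.coalgebra
  refine ⟨hV, inferInstance, hV.subtypeCoalgHom, rfl, ?_, fun E' _ _ _ h hfg => ?_⟩
  · ext x
    exact sub_eq_zero.mp (ker_sweedlerMap_le _ x.2)
  · have hh := coalgHom_apply_mem_ker_sweedlerMap (φ := f.toLinearMap - g.toLinearMap) h
      (by rw [sub_comp, sub_eq_zero]; exact congr(($hfg).toLinearMap))
    refine ⟨hV.codRestrict h hh, hV.subtypeCoalgHom_comp_codRestrict h hh, fun h' hh' => ?_⟩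
    ext x
    exact congr($hh' x)
end

section
/- Let k be a field and f, g : B → A two morphisms of k-bialgebras. Set S := {b ∈ B | f(b) = g(b)} and let D be the sum of all subcoalgebras of B contained in S. Then D is a subbialgebra of B: it contains the unit of B and is closed under the multiplication of B (in addition to being a subcoalgebra). -/
universe u v

/-!
Sums of subcoalgebras are subcoalgebras, `k · 1` is a subcoalgebra because `Δ 1 = 1 ⊗ 1`, and
the product `V * W` of two subcoalgebras is one because `Δ` is multiplicative. The set
`{b | f b = g b}` is a subalgebra, so it contains `k · 1` and the product of any two
subcoalgebras inside it; hence `k · 1` and `D * D` are contained in the sum `D`.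
-/

open TensorProduct

section TensorRange

variable {k : Type u} [CommRing k] {C : Type v} [AddCommGroup C] [Module k C]

lemma range_map_subtype_mono {V W : Submodule k C} (h : V ≤ W) :
    LinearMap.range (map V.subtype V.subtype) ≤ LinearMap.range (map W.subtype W.subtype) := by
  rw [show V.subtype = W.subtype ∘ₗ Submodule.inclusion h from rfl, map_comp]
  exact LinearMap.range_comp_le_range _ _

lemma tmul_mem_range_map_subtype {V : Submodule k C} {a b : C} (ha : a ∈ V) (hb : b ∈ V) :
    a ⊗ₜ[k] b ∈ LinearMap.range (map V.subtype V.subtype) :=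
  ⟨⟨a, ha⟩ ⊗ₜ ⟨b, hb⟩, rfl⟩

lemma range_map_subtype_mul_le {B : Type v} [Ring B] [Algebra k B] (V W : Submodule k B) :
    LinearMap.range (map V.subtype V.subtype) * LinearMap.range (map W.subtype W.subtype) ≤
      LinearMap.range (map (V * W).subtype (V * W).subtype) := by
  rw [range_map_eq_span_tmul, range_map_eq_span_tmul, Submodule.span_mul_span, Submodule.span_le]
  rintro _ ⟨_, ⟨v, v', rfl⟩, _, ⟨w, w', rfl⟩, rfl⟩
  simp only [Algebra.TensorProduct.tmul_mul_tmul]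
  exact tmul_mem_range_map_subtype (Submodule.mul_mem_mul v.2 w.2)
    (Submodule.mul_mem_mul v'.2 w'.2)

end TensorRange

section Subcoalgebra

variable {k : Type u} [CommRing k]

lemma isSubcoalgebra_sSup {C : Type v} [AddCommGroup C] [Module k C] [Coalgebra k C]
    {S : Set (Submodule k C)} (hS : ∀ V ∈ S, IsSubcoalgebra V) : IsSubcoalgebra (sSup S) := by
  suffices sSup S ≤ (LinearMap.range (map (sSup S).subtype (sSup S).subtype)).comap
      (Coalgebra.comul (R := k)) from fun v hv => this hv
  exact sSup_le fun V hV v hv => range_map_subtype_mono (le_sSup hV) (hS V hV v hv)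

variable {B : Type v} [Ring B] [Bialgebra k B]

lemma isSubcoalgebra_one : IsSubcoalgebra (1 : Submodule k B) := by
  have one_mem : (1 : B) ∈ (1 : Submodule k B) := Submodule.one_le.mp le_rfl
  intro v hv
  obtain ⟨r, rfl⟩ := Submodule.mem_one.mp hv
  rw [Algebra.algebraMap_eq_smul_one, map_smul, Bialgebra.comul_one,
    Algebra.TensorProduct.one_def]
  exact Submodule.smul_mem _ r (tmul_mem_range_map_subtype one_mem one_mem)

lemma IsSubcoalgebra.mul {V W : Submodule k B} (hV : IsSubcoalgebra V) (hW : IsSubcoalgebra W) :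
    IsSubcoalgebra (V * W) := by
  intro v hv
  refine Submodule.mul_induction_on hv (fun x hx y hy => ?_) fun x y hx hy => ?_
  · rw [Bialgebra.comul_mul]
    exact range_map_subtype_mul_le V W (Submodule.mul_mem_mul (hV x hx) (hW y hy))
  · rw [map_add]
    exact add_mem hx hy

end Subcoalgebra

lemma Submodule.sSup_mul_sSup_le_of_mul_mem {R A : Type*} [CommSemiring R] [Semiring A]
    [Algebra R A] {S : Set (Submodule R A)} (hS : ∀ V ∈ S, ∀ W ∈ S, V * W ∈ S) :
    sSup S * sSup S ≤ sSup S := by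
  conv_lhs => rw [sSup_eq_iSup', iSup_mul]
  refine iSup_le fun V => ?_
  rw [mul_iSup]
  exact iSup_le fun W => le_sSup (hS V V.2 W W.2)

section Subbialgebra

variable {k : Type u} [CommRing k] {B : Type v} [Ring B] [Bialgebra k B]

def IsSubbialgebra (D : Submodule k B) : Prop :=
  IsSubcoalgebra D ∧ (1 : B) ∈ D ∧ ∀ x ∈ D, ∀ y ∈ D, x * y ∈ D

theorem Subalgebra.isSubbialgebra_sSup_subcoalgebras_le (E : Subalgebra k B) :
    IsSubbialgebra
      (sSup {V : Submodule k B | IsSubcoalgebra V ∧ V ≤ Subalgebra.toSubmodule E}) := by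
  have one_mem : (1 : Submodule k B) ∈
      {V : Submodule k B | IsSubcoalgebra V ∧ V ≤ Subalgebra.toSubmodule E} :=
    ⟨isSubcoalgebra_one, Submodule.one_le.mpr E.one_mem⟩
  refine ⟨isSubcoalgebra_sSup fun V hV => hV.1, Submodule.one_le.mp (le_sSup one_mem),
    fun x hx y hy => Submodule.sSup_mul_sSup_le_of_mul_mem ?_ (Submodule.mul_mem_mul hx hy)⟩
  rintro V ⟨hV, hVE⟩ W ⟨hW, hWE⟩
  exact ⟨hV.mul hW, Submodule.mul_le.mpr fun v hv w hw => E.mul_mem (hVE hv) (hWE hw)⟩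

end Subbialgebra

/-- Let `f, g : B → A` be bialgebra maps and let `D` be the sum of all subcoalgebras of
`B` contained in `S = {b | f b = g b}`.  Then `D` is a subbialgebra of `B`: it is a
subcoalgebra which contains the unit of `B` and is closed under multiplication. -/
theorem sum_of_subcoalgebras_is_subbialgebra {k : Type u} [Field k] {B A : Type v}
    [Ring B] [Ring A] [Bialgebra k B] [Bialgebra k A]
    (f g : B →ₐc[k] A) (D : Submodule k B)
    (hD : D = sSup {V : Submodule k B | IsSubcoalgebra V ∧
      V ≤ LinearMap.ker (f.toCoalgHom.toLinearMap - g.toCoalgHom.toLinearMap)}) :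
    IsSubcoalgebra D ∧ (1 : B) ∈ D ∧ ∀ x ∈ D, ∀ y ∈ D, x * y ∈ D := by
  have hker : LinearMap.ker (f.toCoalgHom.toLinearMap - g.toCoalgHom.toLinearMap) =
      Subalgebra.toSubmodule (AlgHom.equalizer (f : B →ₐ[k] A) g) := by
    ext x
    simp only [LinearMap.mem_ker, LinearMap.sub_apply, sub_eq_zero]
    rfl
  rw [hD, hker]
  exact (AlgHom.equalizer (f : B →ₐ[k] A) g).isSubbialgebra_sSup_subcoalgebras_le
end
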